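/- The NOT-sliding rule decrease: for all v, w ∈ M, σ followed by NOT on the first wire measures (w·l·t, v·r), while NOT on the second wire followed by σ measures (w·t·l, v·r), and the former is strictly greater than the latter in the componentwise shortlex order on M². -/
import Mathlib


/-- The three-letter alphabet. -/
inductive Letter | t | r | l
deriving DecidableEq

/-- Numeric value of a letter, giving the order t < r < l. -/
def Letter.val : Letter → ℕ
  | .t => 0
  | .r => 1
  | .l => 2

instance : LT Letter := ⟨fun a b => a.val < b.val⟩

/-- The shortlex order on the free monoid (lists) over the alphabet:
first by length, then lexicographically with t < r < l. -/
def shortlex (v w : List Letter) : Prop :=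
  v.length < w.length ∨ (v.length = w.length ∧ List.Lex (· < ·) v w)

/-- Reflexive closure of the shortlex order. -/
def shortlexLe (v w : List Letter) : Prop := v = w ∨ shortlex v w

/-- Componentwise (product) weak order on Mⁿ. -/
def prodLe {n : ℕ} (x y : Fin n → List Letter) : Prop := ∀ i, shortlexLe (x i) (y i)

/-- Componentwise (product) strict order on Mⁿ: weakly everywhere, strictly somewhere. -/
def prodLt {n : ℕ} (x y : Fin n → List Letter) : Prop :=
  prodLe x y ∧ ∃ i, shortlex (x i) (y i)

/-- Strictly pointwise order on self-maps of Mⁿ: `lt2 f g` iff `f x < g x` for all `x`. -/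
def lt2 {n : ℕ} (f g : (Fin n → List Letter) → (Fin n → List Letter)) : Prop :=
  ∀ x, prodLt (f x) (g x)

/-- Reflexive closure of the strictly pointwise order. -/
def le2 {n : ℕ} (f g : (Fin n → List Letter) → (Fin n → List Letter)) : Prop :=
  f = g ∨ lt2 f g


lemma lex_key (w : List Letter) :
    List.Lex (· < ·) (w ++ [Letter.t, Letter.l]) (w ++ [Letter.l, Letter.t]) := by
  induction w with
  | nil => exact List.Lex.rel (by decide)
  | cons a tl ih => exact List.Lex.cons ih

lemma shortlex_key (w : List Letter) :
    shortlex (w ++ [Letter.t, Letter.l]) (w ++ [Letter.l, Letter.t]) := by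
  right
  exact ⟨by simp, lex_key w⟩

theorem not_sliding_rule_decrease (v w : List Letter) :
    prodLt
      ![w ++ [Letter.t, Letter.l], v ++ [Letter.r]]
      ![w ++ [Letter.l, Letter.t], v ++ [Letter.r]] := by
  have h := shortlex_key w
  refine ⟨fun i => ?_, ⟨0, h⟩⟩
  fin_cases i
  · exact Or.inr h
  · exact Or.inl rfl
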